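/- Let U be uniformly distributed on (0,1), F0 and F1 cdfs with Q0 the left-continuous quantile function of F0, F1(y-) denoting the left limit of F1 at y, and Y1 a random variable with cdf F1 on the same probability space. Then for all 0 ≤ a < b ≤ 1, P(a < U < b and Y1 < Q0(U)) ≥ sup over x in (a,b) of max(b - x - 1 + F1(Q0(x)-), 0). -/

import Mathlib

open MeasureTheory Set Filter Function

noncomputable section

/-- `F` is a cumulative distribution function. -/
def IsCDF (F : ℝ → ℝ) : Prop :=
  Monotone F ∧ (∀ y, ContinuousWithinAt F (Set.Ici y) y) ∧
    Tendsto F atBot (nhds 0) ∧ Tendsto F atTop (nhds 1)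

open Topology

/-!
On the event `{x < U < b, Y1 ≤ z}` with `z < Q0 x`, monotonicity of the quantile function gives
`Y1 ≤ z < Q0 x ≤ Q0 U`, so the subject is a loser with `a < U < b`. By the Fréchet lower bound
`P(S ∩ T) ≥ P(S) + P(T) - 1`, this event has probability at least `(b - x) + F1 z - 1`; letting
`z ↑ Q0 x` turns `F1 z` into `F1(Q0(x)-)`.
-/

def quantile (F : ℝ → ℝ) (u : ℝ) : ℝ := sInf {y | u ≤ F y}

namespace IsCDF

variable {F : ℝ → ℝ}

lemma bddBelow_setOf_le (hF : IsCDF F) {u : ℝ} (hu : 0 < u) : BddBelow {y | u ≤ F y} := by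
  obtain ⟨w, hw⟩ := (hF.2.2.1.eventually (eventually_lt_nhds hu)).exists
  refine ⟨w, fun y hy => le_of_not_gt fun hyw => ?_⟩
  exact (hy.trans (hF.1 hyw.le)).not_gt hw

lemma nonempty_setOf_le (hF : IsCDF F) {u : ℝ} (hu : u < 1) : {y | u ≤ F y}.Nonempty :=
  ((hF.2.2.2.eventually (eventually_gt_nhds hu)).exists).imp fun _ hy => hy.le

lemma monotoneOn_quantile (hF : IsCDF F) : MonotoneOn (quantile F) (Ioo 0 1) :=
  fun _ hs _ ht hst => csInf_le_csInf (hF.bddBelow_setOf_le hs.1) (hF.nonempty_setOf_le ht.2)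
    fun _ hy => hst.trans hy

end IsCDF

lemma Monotone.leftLim_le_of_forall_lt {α β : Type*} [LinearOrder α] [TopologicalSpace α]
    [OrderTopology α] [ConditionallyCompleteLinearOrder β] [TopologicalSpace β] [OrderTopology β]
    {f : α → β} (hf : Monotone f) {y : α} [(𝓝[<] y).NeBot] {c : β} (h : ∀ z < y, f z ≤ c) :
    leftLim f y ≤ c :=
  _root_.le_of_tendsto (hf.tendsto_leftLim y) (eventually_nhdsWithin_of_forall h)

lemma MeasureTheory.measureReal_add_measureReal_sub_one_le_inter {α : Type*} [MeasurableSpace α]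
    {μ : Measure α} [IsZeroOrProbabilityMeasure μ] {s t : Set α} (hs : MeasurableSet s) :
    μ.real s + μ.real t - 1 ≤ μ.real (s ∩ t) := by
  have := measureReal_union_add_inter' (μ := μ) hs (t := t)
  have := measureReal_le_one (μ := μ) (s := s ∪ t)
  linarith

lemma MeasureTheory.measureReal_preimage_Ioo_of_map_eq_uniform {Ω : Type*} [MeasurableSpace Ω]
    {μ : Measure Ω} {U : Ω → ℝ} (hU : Measurable U)
    (hUlaw : μ.map U = volume.restrict (Ioo (0 : ℝ) 1)) {x b : ℝ} (hx : 0 ≤ x) (hxb : x ≤ b)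
    (hb : b ≤ 1) : μ.real (U ⁻¹' Ioo x b) = b - x := by
  rw [← map_measureReal_apply hU measurableSet_Ioo, hUlaw,
    measureReal_restrict_apply measurableSet_Ioo,
    inter_eq_left.mpr (Ioo_subset_Ioo hx hb), Real.volume_real_Ioo_of_le hxb]

theorem loser_subgroup_lower_bound_general
    {Ω : Type*} [MeasurableSpace Ω] (μ : Measure Ω) [IsProbabilityMeasure μ]
    (U Y1 : Ω → ℝ) (F0 F1 Q0 : ℝ → ℝ)
    (hF0 : IsCDF F0) (hF1 : IsCDF F1)
    (hQ0 : ∀ u, Q0 u = sInf {y : ℝ | u ≤ F0 y})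
    (hU : Measurable U) (hUlaw : μ.map U = volume.restrict (Set.Ioo (0:ℝ) 1))
    (hY1law : ∀ y, (μ {ω | Y1 ω ≤ y}).toReal = F1 y)
    (a b : ℝ) (ha : 0 ≤ a) (hb : b ≤ 1)
 :
    (μ {ω | (a < U ω ∧ U ω < b) ∧ Y1 ω < Q0 (U ω)}).toReal ≥
      ⨆ x ∈ Set.Ioo a b, max (b - x - 1 + leftLim F1 (Q0 x)) 0 := by
  set L := {ω | (a < U ω ∧ U ω < b) ∧ Y1 ω < Q0 (U ω)}
  have hQ0mono : MonotoneOn Q0 (Ioo 0 1) := funext hQ0 ▸ hF0.monotoneOn_quantile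
  refine Real.iSup_le (fun x => Real.iSup_le (fun ⟨hax, hxb⟩ => max_le ?_ measureReal_nonneg)
    measureReal_nonneg) measureReal_nonneg
  change b - x - 1 + leftLim F1 (Q0 x) ≤ μ.real L
  have hx0 : 0 < x := ha.trans_lt hax
  suffices ∀ z < Q0 x, F1 z ≤ μ.real L + 1 - (b - x) by
    linarith [hF1.1.leftLim_le_of_forall_lt this]
  intro z hz
  have hsub : U ⁻¹' Ioo x b ∩ {ω | Y1 ω ≤ z} ⊆ L := fun ω ⟨⟨hxU, hUb⟩, hYz⟩ =>
    ⟨⟨hax.trans hxU, hUb⟩, hYz.trans_lt <| hz.trans_le <|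
      hQ0mono ⟨hx0, hxb.trans_le hb⟩ ⟨hx0.trans hxU, hUb.trans_le hb⟩ hxU.le⟩
  have := calc
    (b - x) + F1 z - 1 = μ.real (U ⁻¹' Ioo x b) + μ.real {ω | Y1 ω ≤ z} - 1 := by
      rw [measureReal_preimage_Ioo_of_map_eq_uniform hU hUlaw hx0.le hxb.le hb, measureReal_def,
        hY1law]
    _ ≤ μ.real (U ⁻¹' Ioo x b ∩ {ω | Y1 ω ≤ z}) :=
      measureReal_add_measureReal_sub_one_le_inter (hU measurableSet_Ioo)
    _ ≤ μ.real L := measureReal_mono hsub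
  linarith

theorem loser_subgroup_lower_bound
    {Ω : Type*} [MeasurableSpace Ω] (μ : Measure Ω) [IsProbabilityMeasure μ]
    (U Y1 : Ω → ℝ) (F0 F1 Q0 : ℝ → ℝ)
    (hF0 : IsCDF F0) (hF1 : IsCDF F1)
    (hQ0 : ∀ u, Q0 u = sInf {y : ℝ | u ≤ F0 y})
    (hU : Measurable U) (hUlaw : μ.map U = volume.restrict (Set.Ioo (0:ℝ) 1))
    (hY1 : Measurable Y1) (hY1law : ∀ y, (μ {ω | Y1 ω ≤ y}).toReal = F1 y)
    (a b : ℝ) (ha : 0 ≤ a) (hab : a < b) (hb : b ≤ 1)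
 :
    (μ {ω | (a < U ω ∧ U ω < b) ∧ Y1 ω < Q0 (U ω)}).toReal ≥
      ⨆ x ∈ Set.Ioo a b, max (b - x - 1 + leftLim F1 (Q0 x)) 0 :=
  loser_subgroup_lower_bound_general μ U Y1 F0 F1 Q0 hF0 hF1 hQ0 hU hUlaw hY1law a b ha hb
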